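/- (Sparse strategies in the point-hyperplane game) Let V ⊂ R^d be finite with max_{v∈V}||v|| = 1, and let ε* = sup_κ inf_μ E_{(v,w)∼μ×κ}[v·w] ≥ 0, where μ ranges over distributions on V and κ over finitely supported distributions on the unit sphere. Then there exists T ≥ 1/(3(ε*)²) (with T = ∞ if ε* = 0) and mixed strategies μ_1,...,μ_T for the point player such that each μ_t is supported on at most t points and for every strategy κ of the hyperplane player, E_{(v,w)∼μ_t×κ}[v·w] ≤ √(3/t). -/

import Mathlib

open scoped RealInnerProductSpace

/-- A finitely supported probability distribution whose support lies in `S`. -/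
def IsDistOn {d : ℕ} (S : Set (EuclideanSpace ℝ (Fin d)))
    (μ : EuclideanSpace ℝ (Fin d) →₀ ℝ) : Prop :=
  (∀ x, 0 ≤ μ x) ∧ (μ.sum fun _ a => a) = 1 ∧ (↑μ.support : Set (EuclideanSpace ℝ (Fin d))) ⊆ S

/-- Expected payoff `P(μ, κ) = E_{(v,w) ∼ μ × κ} [v ⬝ w]` for the Hyperplane player. -/
noncomputable def payoff {d : ℕ} (μ κ : EuclideanSpace ℝ (Fin d) →₀ ℝ) : ℝ :=
  μ.sum fun v a => κ.sum fun w b => a * b * ⟪v, w⟫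

/-!
Against a pure strategy `w` the Point player has a pure best reply, so every unit vector `w` admits
some `v ∈ V` with `⟪v, w⟫ ≤ ε*`. Run the greedy walk `x₀ = 0`, `xₙ₊₁ = xₙ + vₙ` with
`vₙ ∈ V` minimising `⟪xₙ, ·⟫`: then `‖xₙ₊₁‖² ≤ ‖xₙ‖² + 2ε*‖xₙ‖ + 1`, and by induction
`‖xₙ‖² ≤ 3n` as long as `3(n - 1)ε*² ≤ 1` (which keeps `ε*‖xₙ‖ ≤ 1`). The payoff is the inner
product of the barycenters, and the empirical distribution `μₜ` of `v₀, …, vₜ₋₁` has barycenter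
`xₜ / t`, so `P(μₜ, κ) ≤ ‖xₜ‖ / t ≤ √(3/t)`.
-/

open Finset

section EmpiricalDist

variable {α : Type*} (f : ℕ → α) (t : ℕ)

noncomputable def empiricalDist : α →₀ ℝ :=
  ∑ i ∈ range t, Finsupp.single (f i) (t : ℝ)⁻¹

lemma empiricalDist_nonneg (x : α) : 0 ≤ empiricalDist f t x := by
  classical
  rw [empiricalDist, Finsupp.finsetSum_apply]
  exact sum_nonneg fun i _ => by rw [Finsupp.single_apply]; split <;> positivity

lemma sum_empiricalDist (ht : t ≠ 0) : ((empiricalDist f t).sum fun _ a => a) = 1 := by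
  rw [empiricalDist, ← Finsupp.sum_finsetSum_index (fun _ => rfl) (fun _ _ _ => rfl)]
  simp [Finsupp.sum_single_index, ht]

lemma support_empiricalDist_subset [DecidableEq α] :
    (empiricalDist f t).support ⊆ (range t).image f := by
  refine Finsupp.support_finsetSum.trans (biUnion_subset.mpr fun i hi => ?_)
  exact Finsupp.support_single_subset.trans (by simpa using ⟨i, mem_range.mp hi, rfl⟩)

lemma card_support_empiricalDist_le : (empiricalDist f t).support.card ≤ t := by
  classical
  exact (card_le_card (support_empiricalDist_subset f t)).trans
    (card_image_le.trans (card_range t).le)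

end EmpiricalDist

section Barycenter

variable {E : Type*} [AddCommMonoid E] [Module ℝ E]

noncomputable def barycenter (μ : E →₀ ℝ) : E :=
  Finsupp.linearCombination ℝ id μ

lemma barycenter_eq_sum (μ : E →₀ ℝ) : barycenter μ = ∑ v ∈ μ.support, μ v • v :=
  Finsupp.linearCombination_apply ℝ μ

lemma barycenter_single (v : E) (a : ℝ) : barycenter (Finsupp.single v a) = a • v :=
  Finsupp.linearCombination_single ℝ a v

lemma barycenter_empiricalDist (f : ℕ → E) (t : ℕ) :
    barycenter (empiricalDist f t) = (t : ℝ)⁻¹ • ∑ i ∈ range t, f i := by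
  simp [barycenter, empiricalDist, map_sum, Finsupp.linearCombination_single, Finset.smul_sum]

end Barycenter

section Greedy

variable {E : Type*} [NormedAddCommGroup E] [InnerProductSpace ℝ E] (V : Finset E) (hV : V.Nonempty)

noncomputable def greedyPoint (x : E) : E :=
  (V.exists_min_image (⟪x, ·⟫) hV).choose

lemma greedyPoint_mem (x : E) : greedyPoint V hV x ∈ V :=
  (V.exists_min_image (⟪x, ·⟫) hV).choose_spec.1

lemma inner_greedyPoint_le (x : E) {v : E} (hv : v ∈ V) : ⟪x, greedyPoint V hV x⟫ ≤ ⟪x, v⟫ :=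
  (V.exists_min_image (⟪x, ·⟫) hV).choose_spec.2 v hv

noncomputable def greedyWalk : ℕ → E
  | 0 => 0
  | n + 1 => greedyWalk n + greedyPoint V hV (greedyWalk n)

lemma greedyWalk_eq_sum (t : ℕ) :
    greedyWalk V hV t = ∑ i ∈ range t, greedyPoint V hV (greedyWalk V hV i) := by
  induction t with
  | zero => rfl
  | succ n ih => rw [sum_range_succ, ← ih]; rfl

noncomputable def greedyStrategy (t : ℕ) : E →₀ ℝ :=
  empiricalDist (fun i => greedyPoint V hV (greedyWalk V hV i)) t

lemma barycenter_greedyStrategy (t : ℕ) :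
    barycenter (greedyStrategy V hV t) = (t : ℝ)⁻¹ • greedyWalk V hV t := by
  rw [greedyStrategy, barycenter_empiricalDist, greedyWalk_eq_sum]

variable {V} {ε : ℝ}

lemma inner_greedyPoint_le_mul_norm (hε : ∀ w : E, ‖w‖ = 1 → ∃ v ∈ V, ⟪v, w⟫ ≤ ε) (x : E) :
    ⟪x, greedyPoint V hV x⟫ ≤ ε * ‖x‖ := by
  rcases eq_or_ne x 0 with rfl | hx
  · simp
  obtain ⟨v, hv, hvw⟩ := hε (‖x‖⁻¹ • x) (norm_smul_inv_norm hx)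
  have hxv : ⟪x, v⟫ = ‖x‖ * ⟪v, ‖x‖⁻¹ • x⟫ := by
    rw [real_inner_smul_right, real_inner_comm, ← mul_assoc,
      mul_inv_cancel₀ (norm_ne_zero_iff.mpr hx), one_mul]
  calc ⟪x, greedyPoint V hV x⟫ ≤ ⟪x, v⟫ := inner_greedyPoint_le V hV x hv
    _ ≤ ‖x‖ * ε := hxv ▸ mul_le_mul_of_nonneg_left hvw (norm_nonneg x)
    _ = ε * ‖x‖ := mul_comm _ _

lemma norm_greedyWalk_sq_le (hnorm : ∀ v ∈ V, ‖v‖ ≤ 1)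
    (hε : ∀ w : E, ‖w‖ = 1 → ∃ v ∈ V, ⟪v, w⟫ ≤ ε) {t : ℕ} (ht : 3 * ((t : ℝ) - 1) * ε ^ 2 ≤ 1) :
    ‖greedyWalk V hV t‖ ^ 2 ≤ 3 * t := by
  induction t with
  | zero => simp [greedyWalk]
  | succ n ih =>
    push_cast at ht ⊢
    set x := greedyWalk V hV n
    have hx : ‖x‖ ^ 2 ≤ 3 * n := ih (by nlinarith [sq_nonneg ε])
    have hεx : ε * ‖x‖ ≤ 1 :=
      le_of_abs_le ((sq_le_one_iff_abs_le_one _).mp (by nlinarith [sq_nonneg ε]))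
    have hp : ‖greedyPoint V hV x‖ ≤ 1 := hnorm _ (greedyPoint_mem V hV x)
    have hstep : ‖x + greedyPoint V hV x‖ ^ 2 ≤ ‖x‖ ^ 2 + 2 * (ε * ‖x‖) + 1 := by
      rw [norm_add_sq_real]
      nlinarith [inner_greedyPoint_le_mul_norm hV hε x, norm_nonneg (greedyPoint V hV x)]
    change ‖x + greedyPoint V hV x‖ ^ 2 ≤ 3 * ((n : ℝ) + 1)
    linarith

lemma norm_barycenter_greedyStrategy_le (hnorm : ∀ v ∈ V, ‖v‖ ≤ 1)
    (hε : ∀ w : E, ‖w‖ = 1 → ∃ v ∈ V, ⟪v, w⟫ ≤ ε) {t : ℕ} (ht : 3 * ((t : ℝ) - 1) * ε ^ 2 ≤ 1) :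
    ‖barycenter (greedyStrategy V hV t)‖ ≤ √(3 / t) := by
  rw [barycenter_greedyStrategy, norm_smul, norm_inv, Real.norm_natCast,
    Real.le_sqrt (by positivity) (by positivity), mul_pow, div_eq_inv_mul]
  rcases eq_or_ne (t : ℝ) 0 with h | h
  · simp [h]
  calc (t : ℝ)⁻¹ ^ 2 * ‖greedyWalk V hV t‖ ^ 2 ≤ (t : ℝ)⁻¹ ^ 2 * (3 * t) := by
        gcongr; exact norm_greedyWalk_sq_le hV hnorm hε ht
    _ = (t : ℝ)⁻¹ * 3 := by field_simp

end Greedy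

lemma norm_le_one_of_mem_sphere {E : Type*} [SeminormedAddCommGroup E] {w : E}
    (hw : w ∈ Metric.sphere (0 : E) 1) : ‖w‖ ≤ 1 :=
  (mem_sphere_zero_iff_norm.mp hw).le

section Game

variable {d : ℕ}

lemma payoff_eq_inner_barycenter (μ κ : EuclideanSpace ℝ (Fin d) →₀ ℝ) :
    payoff μ κ = ⟪barycenter μ, barycenter κ⟫ := by
  rw [barycenter_eq_sum, barycenter_eq_sum, sum_inner]
  refine sum_congr rfl fun v _ => ?_
  rw [inner_sum]
  refine sum_congr rfl fun w _ => ?_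
  rw [real_inner_smul_left, real_inner_smul_right]
  exact mul_assoc _ _ _

lemma isDistOn_single {S : Set (EuclideanSpace ℝ (Fin d))} {w : EuclideanSpace ℝ (Fin d)}
    (hw : w ∈ S) : IsDistOn S (Finsupp.single w 1) := by
  classical
  refine ⟨fun x => ?_, Finsupp.sum_single_index rfl, ?_⟩
  · rw [Finsupp.single_apply]; split <;> norm_num
  · simpa [Finsupp.support_single] using hw

namespace IsDistOn

variable {S : Set (EuclideanSpace ℝ (Fin d))} {μ : EuclideanSpace ℝ (Fin d) →₀ ℝ}

lemma le_inner_barycenter (hμ : IsDistOn S μ) {w : EuclideanSpace ℝ (Fin d)} {c : ℝ}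
    (hc : ∀ v ∈ S, c ≤ ⟪v, w⟫) : c ≤ ⟪barycenter μ, w⟫ := by
  obtain ⟨hpos, hsum : ∑ v ∈ μ.support, μ v = 1, hsupp⟩ := hμ
  rw [barycenter_eq_sum, sum_inner]
  calc c = ∑ v ∈ μ.support, μ v * c := by rw [← sum_mul, hsum, one_mul]
    _ ≤ ∑ v ∈ μ.support, ⟪μ v • v, w⟫ := sum_le_sum fun v hv => by
      rw [real_inner_smul_left]; exact mul_le_mul_of_nonneg_left (hc v (hsupp hv)) (hpos v)

lemma norm_barycenter_le (hμ : IsDistOn S μ) {r : ℝ} (hS : ∀ v ∈ S, ‖v‖ ≤ r) :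
    ‖barycenter μ‖ ≤ r := by
  obtain ⟨hpos, hsum : ∑ v ∈ μ.support, μ v = 1, hsupp⟩ := hμ
  rw [barycenter_eq_sum]
  calc ‖∑ v ∈ μ.support, μ v • v‖ ≤ ∑ v ∈ μ.support, μ v * r := (norm_sum_le _ _).trans <|
        sum_le_sum fun v hv => by
          rw [norm_smul, Real.norm_of_nonneg (hpos v)]
          exact mul_le_mul_of_nonneg_left (hS v (hsupp hv)) (hpos v)
    _ = r := by rw [← sum_mul, hsum, one_mul]

end IsDistOn

lemma abs_payoff_le_one {S T : Set (EuclideanSpace ℝ (Fin d))} {μ κ : EuclideanSpace ℝ (Fin d) →₀ ℝ}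
    (hμ : IsDistOn S μ) (hS : ∀ v ∈ S, ‖v‖ ≤ 1) (hκ : IsDistOn T κ) (hT : ∀ w ∈ T, ‖w‖ ≤ 1) :
    |payoff μ κ| ≤ 1 := by
  rw [payoff_eq_inner_barycenter]
  exact (abs_real_inner_le_norm _ _).trans <|
    mul_le_one₀ (hμ.norm_barycenter_le hS) (norm_nonneg _) (hκ.norm_barycenter_le hT)

noncomputable def guaranteedPayoff (V : Finset (EuclideanSpace ℝ (Fin d)))
    (κ : EuclideanSpace ℝ (Fin d) →₀ ℝ) : ℝ :=
  sInf {s : ℝ | ∃ μ, IsDistOn (↑V) μ ∧ s = payoff μ κ}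

noncomputable def gameValue (V : Finset (EuclideanSpace ℝ (Fin d))) : ℝ :=
  sSup {r : ℝ | ∃ κ, IsDistOn (Metric.sphere (0 : EuclideanSpace ℝ (Fin d)) 1) κ ∧
    r = guaranteedPayoff V κ}

variable {V : Finset (EuclideanSpace ℝ (Fin d))}

lemma guaranteedPayoff_le_one (hV : V.Nonempty) (hnorm : ∀ v ∈ V, ‖v‖ ≤ 1)
    {κ : EuclideanSpace ℝ (Fin d) →₀ ℝ} (hκ : IsDistOn (Metric.sphere 0 1) κ) :
    guaranteedPayoff V κ ≤ 1 := by
  obtain ⟨v, hv⟩ := hV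
  have hbound {μ} (hμ : IsDistOn (↑V) μ) : |payoff μ κ| ≤ 1 :=
    abs_payoff_le_one hμ hnorm hκ fun _ => norm_le_one_of_mem_sphere
  have hbelow : BddBelow {s : ℝ | ∃ μ, IsDistOn (↑V) μ ∧ s = payoff μ κ} := by
    refine ⟨-1, ?_⟩
    rintro s ⟨μ, hμ, rfl⟩
    exact neg_le_of_abs_le (hbound hμ)
  have hδv : IsDistOn (↑V) (Finsupp.single v 1) := isDistOn_single (mem_coe.mpr hv)
  exact (csInf_le hbelow ⟨_, hδv, rfl⟩).trans (le_of_abs_le (hbound hδv))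

lemma guaranteedPayoff_le_gameValue (hV : V.Nonempty) (hnorm : ∀ v ∈ V, ‖v‖ ≤ 1)
    {κ : EuclideanSpace ℝ (Fin d) →₀ ℝ} (hκ : IsDistOn (Metric.sphere 0 1) κ) :
    guaranteedPayoff V κ ≤ gameValue V := by
  refine le_csSup ⟨1, ?_⟩ ⟨κ, hκ, rfl⟩
  rintro r ⟨κ', hκ', rfl⟩
  exact guaranteedPayoff_le_one hV hnorm hκ'

lemma le_guaranteedPayoff_single (hV : V.Nonempty) {w : EuclideanSpace ℝ (Fin d)} {c : ℝ}
    (hc : ∀ v ∈ V, c ≤ ⟪v, w⟫) : c ≤ guaranteedPayoff V (Finsupp.single w 1) := by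
  obtain ⟨v, hv⟩ := hV
  refine le_csInf ⟨_, _, isDistOn_single (mem_coe.mpr hv), rfl⟩ ?_
  rintro s ⟨μ, hμ, rfl⟩
  rw [payoff_eq_inner_barycenter, barycenter_single, one_smul]
  exact hμ.le_inner_barycenter hc

lemma exists_inner_le_gameValue (hV : V.Nonempty) (hnorm : ∀ v ∈ V, ‖v‖ ≤ 1)
    {w : EuclideanSpace ℝ (Fin d)} (hw : ‖w‖ = 1) : ∃ v ∈ V, ⟪v, w⟫ ≤ gameValue V := by
  obtain ⟨v, hv, hvmin⟩ := V.exists_min_image (⟪·, w⟫) hV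
  refine ⟨v, hv, (le_guaranteedPayoff_single hV hvmin).trans ?_⟩
  exact guaranteedPayoff_le_gameValue hV hnorm (isDistOn_single (mem_sphere_zero_iff_norm.mpr hw))

lemma isDistOn_greedyStrategy (hV : V.Nonempty) {t : ℕ} (ht : t ≠ 0) :
    IsDistOn (↑V) (greedyStrategy V hV t) := by
  classical
  refine ⟨empiricalDist_nonneg _ t, sum_empiricalDist _ t ht, ?_⟩
  refine (coe_subset.mpr (support_empiricalDist_subset _ t)).trans ?_
  simpa [Set.subset_def] using fun i _ => greedyPoint_mem V hV _

lemma payoff_greedyStrategy_le (hV : V.Nonempty) (hnorm : ∀ v ∈ V, ‖v‖ ≤ 1) {t : ℕ}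
    (ht : 3 * ((t : ℝ) - 1) * gameValue V ^ 2 ≤ 1) {κ : EuclideanSpace ℝ (Fin d) →₀ ℝ}
    (hκ : IsDistOn (Metric.sphere 0 1) κ) : payoff (greedyStrategy V hV t) κ ≤ √(3 / t) := by
  have hκ1 : ‖barycenter κ‖ ≤ 1 := hκ.norm_barycenter_le fun _ => norm_le_one_of_mem_sphere
  have hμ := norm_barycenter_greedyStrategy_le hV hnorm
    (fun _ => exists_inner_le_gameValue hV hnorm) ht
  rw [payoff_eq_inner_barycenter]
  exact (real_inner_le_norm _ _).trans ((mul_le_of_le_one_right (norm_nonneg _) hκ1).trans hμ)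

end Game

theorem sparse_strategies_general {d : ℕ} (V : Finset (EuclideanSpace ℝ (Fin d)))
    (hnorm : ∀ v ∈ V, ‖v‖ ≤ 1) (hmax : ∃ v ∈ V, ‖v‖ = 1)
    (εstar : ℝ)
    (hεdef : εstar = sSup {r : ℝ |
      ∃ κ, IsDistOn (Metric.sphere (0 : EuclideanSpace ℝ (Fin d)) 1) κ ∧
        r = sInf {s : ℝ | ∃ μ, IsDistOn (↑V) μ ∧ s = payoff μ κ}}) :
    ∃ (T : ℕ∞) (μseq : ℕ → (EuclideanSpace ℝ (Fin d) →₀ ℝ)),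
      (εstar = 0 → T = ⊤) ∧
      (εstar ≠ 0 → ∃ T' : ℕ, T = (T' : ℕ∞) ∧ 1 / (3 * εstar ^ 2) ≤ (T' : ℝ)) ∧
      ∀ t : ℕ, 1 ≤ t → (t : ℕ∞) ≤ T →
        IsDistOn (↑V) (μseq t) ∧ (μseq t).support.card ≤ t ∧
        ∀ κ, IsDistOn (Metric.sphere (0 : EuclideanSpace ℝ (Fin d)) 1) κ →
          payoff (μseq t) κ ≤ Real.sqrt (3 / t) := by
  obtain ⟨v₁, hv₁, -⟩ := hmax
  have hV : V.Nonempty := ⟨v₁, hv₁⟩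
  have hε : εstar = gameValue V := hεdef
  have hgreedy (t : ℕ) (ht1 : 1 ≤ t) (ht : 3 * ((t : ℝ) - 1) * εstar ^ 2 ≤ 1) :
      IsDistOn (↑V) (greedyStrategy V hV t) ∧ (greedyStrategy V hV t).support.card ≤ t ∧
        ∀ κ, IsDistOn (Metric.sphere (0 : EuclideanSpace ℝ (Fin d)) 1) κ →
          payoff (greedyStrategy V hV t) κ ≤ √(3 / t) :=
    ⟨isDistOn_greedyStrategy hV (by omega), card_support_empiricalDist_le _ t,
      fun _ hκ => payoff_greedyStrategy_le hV hnorm (hε ▸ ht) hκ⟩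
  by_cases hε0 : εstar = 0
  · exact ⟨⊤, greedyStrategy V hV, fun _ => rfl, fun h => (h hε0).elim,
      fun t ht1 _ => hgreedy t ht1 (by simp [hε0])⟩
  refine ⟨⌈1 / (3 * εstar ^ 2)⌉₊, greedyStrategy V hV, fun h => (hε0 h).elim,
    fun _ => ⟨_, rfl, Nat.le_ceil _⟩, fun t ht1 htT => hgreedy t ht1 ?_⟩
  have htT' : (t : ℝ) < 1 / (3 * εstar ^ 2) + 1 :=
    (Nat.cast_le.mpr (ENat.natCast_le_natCast.mp htT)).trans_lt
      (Nat.ceil_lt_add_one (by positivity))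
  rw [← sub_lt_iff_lt_add, lt_div_iff₀ (by positivity)] at htT'
  linarith

theorem sparse_strategies {d : ℕ} (V : Finset (EuclideanSpace ℝ (Fin d)))
    (hnorm : ∀ v ∈ V, ‖v‖ ≤ 1) (hmax : ∃ v ∈ V, ‖v‖ = 1)
    (εstar : ℝ)
    (hεdef : εstar = sSup {r : ℝ |
      ∃ κ, IsDistOn (Metric.sphere (0 : EuclideanSpace ℝ (Fin d)) 1) κ ∧
        r = sInf {s : ℝ | ∃ μ, IsDistOn (↑V) μ ∧ s = payoff μ κ}})
    (hε0 : 0 ≤ εstar) :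
    ∃ (T : ℕ∞) (μseq : ℕ → (EuclideanSpace ℝ (Fin d) →₀ ℝ)),
      (εstar = 0 → T = ⊤) ∧
      (εstar ≠ 0 → ∃ T' : ℕ, T = (T' : ℕ∞) ∧ 1 / (3 * εstar ^ 2) ≤ (T' : ℝ)) ∧
      ∀ t : ℕ, 1 ≤ t → (t : ℕ∞) ≤ T →
        IsDistOn (↑V) (μseq t) ∧ (μseq t).support.card ≤ t ∧
        ∀ κ, IsDistOn (Metric.sphere (0 : EuclideanSpace ℝ (Fin d)) 1) κ →
          payoff (μseq t) κ ≤ Real.sqrt (3 / t) :=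
  sparse_strategies_general V hnorm hmax εstar hεdef
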